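/- arXiv:2406.01905 — 9 statements merged into one kernel-verified Lean document; each statement's English description precedes it below -/
import Mathlib

section
/- For every complex number μ and every integer j ≥ 1, the sum ∑_{m=0}^{j} (μ)_m · (μ + 2m) · (−μ − 2j)_{j−m} / (m! · (j−m)!) equals 0, where (a)_n = a(a+1)⋯(a+n−1) denotes the Pochhammer symbol. -/
/-- For every complex `μ` and integer `j ≥ 1`,
`∑_{m=0}^{j} (μ)_m (μ+2m) (−μ−2j)_{j−m} / (m! (j−m)!) = 0`. -/
theorem pochhammer_sum_eq_zero (μ : ℂ) (j : ℕ) (hj : 1 ≤ j) :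
    ∑ m ∈ Finset.range (j + 1),
      (ascPochhammer ℂ m).eval μ * (μ + 2 * (m : ℂ)) *
        (ascPochhammer ℂ (j - m)).eval (-μ - 2 * (j : ℂ)) /
          ((Nat.factorial m : ℂ) * (Nat.factorial (j - m) : ℂ)) = 0 := by
  set g : ℕ → ℂ := fun m =>
    -((ascPochhammer ℂ m).eval μ * m * (μ + j + m) *
        (ascPochhammer ℂ (j - m)).eval (-μ - 2 * (j : ℂ))) /
      ((j : ℂ) * (Nat.factorial m : ℂ) * (Nat.factorial (j - m) : ℂ)) with hg
  have hjC : (j : ℂ) ≠ 0 := Nat.cast_ne_zero.mpr (by omega)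
  have step : ∀ m ∈ Finset.range j,
      (ascPochhammer ℂ m).eval μ * (μ + 2 * (m : ℂ)) *
        (ascPochhammer ℂ (j - m)).eval (-μ - 2 * (j : ℂ)) /
          ((Nat.factorial m : ℂ) * (Nat.factorial (j - m) : ℂ)) =
      g (m + 1) - g m := by
    intro m hm
    rw [Finset.mem_range] at hm
    obtain ⟨k, hk⟩ : ∃ k, j = m + k + 1 := ⟨j - m - 1, by omega⟩
    subst hk
    have h1 : m + k + 1 - m = k + 1 := by omega
    have h2 : m + k + 1 - (m + 1) = k := by omega
    rw [hg]
    simp only [h1, h2]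
    rw [ascPochhammer_succ_eval, ascPochhammer_succ_eval,
      Nat.factorial_succ m, Nat.factorial_succ k]
    have hm' : (Nat.factorial m : ℂ) ≠ 0 := Nat.cast_ne_zero.mpr m.factorial_ne_zero
    have hk' : (Nat.factorial k : ℂ) ≠ 0 := Nat.cast_ne_zero.mpr k.factorial_ne_zero
    have hmk : ((m : ℂ) + k + 1) ≠ 0 := by
      have h : (m + k + 1 : ℕ) ≠ 0 := by omega
      exact_mod_cast h
    have hm1 : (m : ℂ) + 1 ≠ 0 := by exact_mod_cast (Nat.succ_ne_zero m)
    have hk1 : (k : ℂ) + 1 ≠ 0 := by exact_mod_cast (Nat.succ_ne_zero k)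
    clear_value g
    clear hg hm hj hjC g
    push_cast
    generalize Polynomial.eval μ (ascPochhammer ℂ m) = P
    generalize Polynomial.eval (-μ - 2 * ((m : ℂ) + k + 1)) (ascPochhammer ℂ k) = Q
    have hd1 : (Nat.factorial m : ℂ) * (((k : ℂ) + 1) * (Nat.factorial k : ℂ)) ≠ 0 :=
      mul_ne_zero hm' (mul_ne_zero hk1 hk')
    have hd2 : ((m : ℂ) + (k : ℂ) + 1) * (((m : ℂ) + 1) * (Nat.factorial m : ℂ)) * (Nat.factorial k : ℂ) ≠ 0 :=
      mul_ne_zero (mul_ne_zero hmk (mul_ne_zero hm1 hm')) hk'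
    have hd3 : ((m : ℂ) + (k : ℂ) + 1) * (Nat.factorial m : ℂ) * (((k : ℂ) + 1) * (Nat.factorial k : ℂ)) ≠ 0 :=
      mul_ne_zero (mul_ne_zero hmk hm') (mul_ne_zero hk1 hk')
    rw [div_sub_div _ _ hd2 hd3, div_eq_div_iff hd1 (mul_ne_zero hd2 hd3)]
    ring
  rw [Finset.sum_range_succ, Finset.sum_congr rfl step, Finset.sum_range_sub g]
  have h0 : g 0 = 0 := by simp [hg]
  have hj0 : j - j = 0 := Nat.sub_self j
  rw [h0, sub_zero, hg]
  simp only [hj0, ascPochhammer_zero, Polynomial.eval_one, Nat.factorial_zero]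
  have hjf : (Nat.factorial j : ℂ) ≠ 0 := Nat.cast_ne_zero.mpr j.factorial_ne_zero
  field_simp
  ring
end

section
/- For any 2×2 matrices x, y, z over a commutative ring, tr(xy)·tr(xz) − tr(xyxz) = det(x) · tr(y · adjugate(z)). -/
/-- For 2×2 matrices over a commutative ring,
`tr(xy)·tr(xz) − tr(xyxz) = det(x)·tr(y·adj(z))`. -/
theorem trace_polarized_rank_two {R : Type*} [CommRing R]
    (x y z : Matrix (Fin 2) (Fin 2) R) :
    Matrix.trace (x * y) * Matrix.trace (x * z) - Matrix.trace (x * y * x * z) =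
      x.det * Matrix.trace (y * z.adjugate) := by
  simp [Matrix.trace, Matrix.mul_apply, Matrix.det_fin_two, Matrix.adjugate_fin_two,
    Fin.sum_univ_two, Matrix.diag]
  ring
end

section
/- For any 3×3 matrices y and z over a commutative ring, y·adj(z) + z·(adj(z+y) − adj(z) − adj(y)) = tr(adj(z)·y)·I, where adj denotes the classical adjugate and I is the identity matrix. -/
/-- Derivative of `z·adj(z) = det(z)·I` along `y`, for 3×3 matrices:
`y·adj(z) + z·(z×y) = tr(adj(z)·y)·I` where `z×y = adj(z+y) − adj(z) − adj(y)`. -/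
theorem freudenthal_derivative_identity {R : Type*} [CommRing R]
    (y z : Matrix (Fin 3) (Fin 3) R) :
    y * z.adjugate + z * ((z + y).adjugate - z.adjugate - y.adjugate) =
      Matrix.trace (z.adjugate * y) • (1 : Matrix (Fin 3) (Fin 3) R) := by
  ext i j
  simp only [Matrix.adjugate_fin_three, Matrix.add_apply, Matrix.sub_apply, Matrix.mul_apply,
    Matrix.smul_apply, Matrix.one_apply, Matrix.trace, Matrix.diag, Matrix.of_apply,
    Fin.sum_univ_three, smul_eq_mul]
  fin_cases i <;> fin_cases j <;> simp <;> ring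
end

section
/- For any 3×3 matrices x, y over a commutative ring, tr(xy)·x − ( adj(adj(x) + y) − adj(adj(x)) − adj(y) ) = x·y·x. -/
/-- For 3×3 matrices over a commutative ring:
`tr(xy)·x − (x^♯ × y) = xyx`, where `x^♯ = adj(x)` and
`a×b = adj(a+b) − adj(a) − adj(b)`. -/
theorem quadratic_representation_eq {R : Type*} [CommRing R]
    (x y : Matrix (Fin 3) (Fin 3) R) :
    Matrix.trace (x * y) • x -
        ((x.adjugate + y).adjugate - x.adjugate.adjugate - y.adjugate) =
      x * y * x := by
  ext i j
  simp only [Matrix.adjugate_fin_three, Matrix.sub_apply, Matrix.add_apply,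
    Matrix.smul_apply, Matrix.mul_apply, Matrix.trace, Matrix.diag,
    Fin.sum_univ_three, smul_eq_mul, Matrix.of_apply, Matrix.cons_val',
    Matrix.cons_val_zero, Matrix.cons_val_one, Matrix.head_cons,
    Matrix.empty_val', Matrix.cons_val_fin_one, Matrix.head_fin_const,
    Matrix.cons_val_two, Matrix.tail_cons]
  fin_cases i <;> fin_cases j <;> simp <;> ring
end

section
/- Let R be a commutative ring, X a symmetric 3×3 matrix over R, and ξ = (y₁,y₂,y₃) ∈ R³. Let A(ξ) be the antisymmetric matrix with rows ((0, y₃, −y₂), (−y₃, 0, y₁), (y₂, −y₁, 0)). Then det(X + A(ξ)) = det(X) + ξ X ξᵀ, where ξ X ξᵀ = ∑_{i,j} y_i X_{ij} y_j. -/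
/-- The antisymmetric 3×3 matrix associated to a vector `ξ = (y₁,y₂,y₃)`. -/
def altMat {R : Type*} [CommRing R] (ξ : Fin 3 → R) : Matrix (Fin 3) (Fin 3) R :=
  !![0, ξ 2, -(ξ 1); -(ξ 2), 0, ξ 0; ξ 1, -(ξ 0), 0]

/-- Determinant of the sum of a symmetric and an antisymmetric 3×3 matrix:
`det(X + A(ξ)) = det(X) + ξ X ξᵀ`. -/
theorem det_symm_add_alt {R : Type*} [CommRing R]
    (X : Matrix (Fin 3) (Fin 3) R) (hX : X.transpose = X) (ξ : Fin 3 → R) :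
    (X + altMat ξ).det = X.det + ∑ i, ∑ j, ξ i * X i j * ξ j := by
  have h01 : X 1 0 = X 0 1 := congrFun (congrFun hX 0) 1
  have h02 : X 2 0 = X 0 2 := congrFun (congrFun hX 0) 2
  have h12 : X 2 1 = X 1 2 := congrFun (congrFun hX 1) 2
  simp [altMat, Matrix.det_fin_three, Fin.sum_univ_three, Matrix.add_apply,
    Matrix.cons_val_zero, Matrix.cons_val_one, h01, h02, h12]
  ring
end

section
/- Let R be a commutative ring, X a symmetric 3×3 matrix over R, and ξ = (y₁,y₂,y₃) ∈ R³, with A(ξ) the antisymmetric matrix having rows ((0, y₃, −y₂), (−y₃, 0, y₁), (y₂, −y₁, 0)). Then adj(X + A(ξ)) = adj(X) + ξᵀξ + A(−ξX), where ξᵀξ is the symmetric rank-one matrix with entries (ξᵀξ)_{ij} = y_i y_j and ξX is the row vector with entries (ξX)_j = ∑_i y_i X_{ij}. -/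
/-- Adjugate of the sum of a symmetric and an antisymmetric 3×3 matrix:
`adj(X + A(ξ)) = adj(X) + ξᵀξ + A(−ξX)`. -/
theorem adjugate_symm_add_alt {R : Type*} [CommRing R]
    (X : Matrix (Fin 3) (Fin 3) R) (hX : X.transpose = X) (ξ : Fin 3 → R) :
    (X + altMat ξ).adjugate =
      X.adjugate + Matrix.of (fun i j => ξ i * ξ j) + altMat (-(Matrix.vecMul ξ X)) := by
  have h10 : X 1 0 = X 0 1 := (congrFun (congrFun hX 1) 0).symm
  have h20 : X 2 0 = X 0 2 := (congrFun (congrFun hX 2) 0).symm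
  have h21 : X 2 1 = X 1 2 := (congrFun (congrFun hX 2) 1).symm
  ext i j
  fin_cases i <;> fin_cases j <;>
    simp [Matrix.adjugate_fin_three, altMat, Matrix.vecMul, dotProduct,
      Matrix.vecHead, Matrix.vecTail, Fin.sum_univ_three, h10, h20, h21] <;> ring
end

section
/- For any 3×3 matrices x, y, z over a commutative ring, tr( (adj(x+y) − adj(x) − adj(y)) · z ) = det(x+y+z) − det(x+y) − det(x+z) − det(y+z) + det(x) + det(y) + det(z). -/
/-- Polarization of the cubic form `det` on 3×3 matrices:
`tr((x×y)·z) = det(x+y+z) − det(x+y) − det(x+z) − det(y+z) + det(x) + det(y) + det(z)`,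
where `x×y = adj(x+y) − adj(x) − adj(y)`. -/
theorem freudenthal_trace_polarization {R : Type*} [CommRing R]
    (x y z : Matrix (Fin 3) (Fin 3) R) :
    Matrix.trace (((x + y).adjugate - x.adjugate - y.adjugate) * z) =
      (x + y + z).det - (x + y).det - (x + z).det - (y + z).det +
        x.det + y.det + z.det := by
  simp only [Matrix.trace_fin_three, Matrix.det_fin_three, Matrix.mul_apply,
    Fin.sum_univ_three, Matrix.adjugate_fin_three, Matrix.sub_apply, Matrix.add_apply,
    Matrix.of_apply, Matrix.cons_val', Matrix.cons_val_zero, Matrix.cons_val_one,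
    Matrix.head_cons, Matrix.empty_val', Matrix.cons_val_fin_one, Matrix.head_fin_const,
    Matrix.cons_val_two, Matrix.tail_cons]
  ring
end

section
/- Cayley's identity: for every n ≥ 1 and every integer s ≥ 1, applying the differential operator det(∂) := det( (∂/∂x_{ij})_{1≤i,j≤n} ) (the determinant of the matrix of partial-derivative operators, expanded by the Leibniz formula over permutations with signs) to the polynomial det(X)^s in the n² variables x_{ij} yields s(s+1)(s+2)⋯(s+n−1) · det(X)^{s−1}. -/
open MvPolynomial

/-- The differential operator `det(∂) = ∑_{σ ∈ S_n} sgn(σ) ∏_i ∂/∂x_{i,σ(i)}`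
acting on polynomials in the `n²` variables `x_{ij}`. -/
noncomputable def detDeriv (n : ℕ) :
    Module.End ℚ (MvPolynomial (Fin n × Fin n) ℚ) :=
  ∑ σ : Equiv.Perm (Fin n),
    ((Equiv.Perm.sign σ : ℤ) : ℚ) •
      (List.ofFn fun i : Fin n =>
        ((MvPolynomial.pderiv (i, σ i)).toLinearMap :
          Module.End ℚ (MvPolynomial (Fin n × Fin n) ℚ))).prod

/-- The generic `n×n` matrix of variables. -/
noncomputable def genericMatrix (n : ℕ) :
    Matrix (Fin n) (Fin n) (MvPolynomial (Fin n × Fin n) ℚ) :=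
  Matrix.of fun i j => MvPolynomial.X (i, j)

/-
Write `p(∂)` for the operator obtained from a polynomial `p` by substituting `∂/∂x_{ij}` for
`x_{ij}`; then `det(∂) = (det X)(∂)`. The stronger identity for minors,
`(det X)^k · det(X_{αβ})(∂) (det X)^s = s(s+1)⋯(s+k-1) · det((adj X)_{βα}) · (det X)^s`
for all `α β : Fin k → m`, follows by induction on `k`: expand `det(X_{αβ})` along its first
row and differentiate the induction hypothesis. Because `det X · ∂(adj X)/∂x_{ab}` is a
rank-one correction of `(adj X)_{ba} · adj X`, the signed sum of the differentiated minors
collapses to `2k · det((adj X)_{βα})` by two Laplace expansions. For `α = β` a bijection onto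
the index set, `det(adj X) = (det X)^{n-1}`, and cancelling `(det X)^n` gives Cayley's identity.
-/

open Matrix

namespace MvPolynomial

variable {σ R : Type*} [CommRing R] [DecidableEq σ]

theorem pderiv_pderiv_comm (i j : σ) (p : MvPolynomial σ R) :
    pderiv i (pderiv j p) = pderiv j (pderiv i p) := by
  have hbracket : ⁅pderiv i, pderiv j⁆ = (0 : Derivation R (MvPolynomial σ R) _) :=
    derivation_ext fun k => by
      rw [Derivation.commutator_apply, pderiv_X, pderiv_X, Pi.single_apply, Pi.single_apply]
      split_ifs <;> simp
  exact sub_eq_zero.mp (by rw [← Derivation.commutator_apply, hbracket, Derivation.zero_apply])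

variable (σ R) in
noncomputable abbrev pderivSubalgebra : Subalgebra R (Module.End R (MvPolynomial σ R)) :=
  Algebra.adjoin R (Set.range fun i : σ => (pderiv i).toLinearMap)

instance : IsMulCommutative (pderivSubalgebra σ R) :=
  Algebra.isMulCommutative_adjoin R <| by
    rintro _ ⟨i, rfl⟩ _ ⟨j, rfl⟩
    exact LinearMap.ext (pderiv_pderiv_comm i j)

-- `p ↦ p(∂)`; `aeval` needs a commutative target, hence the detour through the subalgebra
-- generated by the pairwise commuting `pderiv i`.
open scoped IsMulCommutative in
variable (σ R) in
noncomputable def aevalPDeriv : MvPolynomial σ R →ₐ[R] Module.End R (MvPolynomial σ R) :=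
  (pderivSubalgebra σ R).val.comp <| aeval fun i =>
    ⟨(pderiv i).toLinearMap, Algebra.subset_adjoin ⟨i, rfl⟩⟩

@[simp]
theorem aevalPDeriv_X (i : σ) : aevalPDeriv σ R (X i) = (pderiv i).toLinearMap := by
  simp [aevalPDeriv]

end MvPolynomial

namespace Derivation

variable {R A : Type*} [CommRing R] [CommRing A] [Algebra R A] (D : Derivation R A A)

theorem leibniz_finset_prod {ι : Type*} [DecidableEq ι] (s : Finset ι) (g : ι → A) :
    D (∏ i ∈ s, g i) = ∑ i ∈ s, ∏ j ∈ s, Function.update g i (D (g i)) j := by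
  induction s using Finset.induction_on with
  | empty => simp
  | insert a s ha ih =>
    rw [Finset.prod_insert ha, leibniz, smul_eq_mul, smul_eq_mul, ih, Finset.mul_sum,
      Finset.sum_insert ha, Finset.prod_insert ha, Function.update_self, add_comm,
      Finset.prod_congr rfl fun j hj => Function.update_of_ne (ne_of_mem_of_not_mem hj ha) _ _]
    congr 1
    · ring
    · refine Finset.sum_congr rfl fun i hi => ?_
      rw [Finset.prod_insert ha, Function.update_of_ne (ne_of_mem_of_not_mem hi ha).symm]

theorem map_det {m : Type*} [Fintype m] [DecidableEq m] (M : Matrix m m A) :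
    D M.det = ∑ j, (M.updateCol j fun i => D (M i j)).det := by
  simp only [Matrix.det_apply, map_sum, Units.smul_def, map_zsmul, leibniz_finset_prod,
    Finset.smul_sum]
  rw [Finset.sum_comm]
  refine Finset.sum_congr rfl fun j _ => Finset.sum_congr rfl fun σ _ => ?_
  congr 1
  refine Finset.prod_congr rfl fun i _ => ?_
  rw [Matrix.updateCol_apply, Function.update_apply]
  split_ifs with h
  · rw [h]
  · rfl

theorem mul_map_det_of_mul_map_eq_sub {m : Type*} [Fintype m] [DecidableEq m]
    (M : Matrix m m A) (f c : A) (v w : m → A)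
    (h : ∀ i j, f * D (M i j) = c * M i j - v i * w j) :
    f * D M.det = Fintype.card m • (c * M.det) - ∑ j, w j * (M.updateCol j v).det := by
  have hcol : ∀ j, f * (M.updateCol j fun i => D (M i j)).det
      = c * M.det - w j * (M.updateCol j v).det := fun j => by
    have : f • (fun i => D (M i j)) = c • (fun i => M i j) + (-w j) • v := by
      ext i
      simp only [Pi.smul_apply, Pi.add_apply, smul_eq_mul, h]
      ring
    rw [← Matrix.det_updateCol_smul, this, Matrix.det_updateCol_add, Matrix.det_updateCol_smul,
      Matrix.det_updateCol_smul, Matrix.updateCol_eq_self]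
    ring
  rw [map_det, Finset.mul_sum, Finset.sum_congr rfl fun j _ => hcol j, Finset.sum_sub_distrib,
    Finset.sum_const, Finset.card_univ]

theorem mul_map_pow (f : A) (n : ℕ) : f * D (f ^ n) = n * f ^ n * D f := by
  rcases n with _ | n
  · simp
  · rw [leibniz_pow, nsmul_eq_mul, smul_eq_mul, Nat.add_sub_cancel, pow_succ]
    ring

theorem pow_succ_mul_map_of_pow_mul_eq {f g h : A} {k s : ℕ} (hg : f ^ k * g = h * f ^ s) :
    f ^ (k + 1) * D g = (f * D h + ((s : A) - k) * h * D f) * f ^ s := by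
  have hd := congrArg (f * D ·) hg
  simp only [leibniz, smul_eq_mul] at hd
  linear_combination hd - g * mul_map_pow D f k + h * mul_map_pow D f s - (k : A) * D f * hg

theorem map_matrix_mul {l m n : Type*} [Fintype m] (M : Matrix l m A) (N : Matrix m n A) :
    (M * N).map D = M.map D * N + M * N.map D := by
  ext i k
  simp only [Matrix.map_apply, Matrix.add_apply, Matrix.mul_apply, map_sum, leibniz,
    smul_eq_mul, ← Finset.sum_add_distrib]
  exact Finset.sum_congr rfl fun j _ => by ring

variable {m : Type*} [Fintype m] [DecidableEq m] {D} {X : Matrix m m A} {a b : m}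

theorem map_det_of_map_eq_single (hX : X.map D = single a b 1) : D X.det = X.adjugate b a := by
  have hcol : ∀ i j, D (X i j) = single a b 1 i j := fun i j => by rw [← hX, Matrix.map_apply]
  rw [map_det, Finset.sum_eq_single b]
  · have : (fun i => D (X i b)) = Pi.single a 1 := by
      ext i
      simp [hcol, single_apply, Pi.single_apply, eq_comm]
    rw [this, ← cramer_apply, cramer_eq_adjugate_mulVec, mulVec_single_one]
    rfl
  · intro j _ hj
    exact det_eq_zero_of_column_eq_zero j fun i => by simp [hcol, Ne.symm hj]
  · simp

theorem det_mul_map_adjugate_of_map_eq_single (hX : X.map D = single a b 1) (c d : m) :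
    X.det * D (X.adjugate c d)
      = X.adjugate b a * X.adjugate c d - X.adjugate c a * X.adjugate b d := by
  have hXY : (X * X.adjugate).map D = diagonal fun _ => X.adjugate b a := by
    rw [mul_adjugate, smul_one_eq_diagonal, diagonal_map (map_zero D)]
    exact congrArg diagonal (funext fun _ => map_det_of_map_eq_single hX)
  rw [map_matrix_mul, hX] at hXY
  -- multiplying by `adj X` on the left turns `X * D (adj X)` into `det X • D (adj X)`
  have key : (X.adjugate * (single a b 1 * X.adjugate + X * X.adjugate.map D) : Matrix m m A) c d
      = (X.adjugate * diagonal fun _ => X.adjugate b a : Matrix m m A) c d := by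
    rw [hXY]
  have hsingle : (X.adjugate * (single a b 1 * X.adjugate) : Matrix m m A) c d
      = X.adjugate c a * X.adjugate b d := by
    rw [mul_apply, Finset.sum_eq_single a (fun k _ hk => by
      rw [single_mul_apply_of_ne _ _ _ _ _ hk, mul_zero]) (by simp), single_mul_apply_same,
      one_mul]
  rw [Matrix.mul_add, ← Matrix.mul_assoc X.adjugate X, adjugate_mul, smul_mul, one_mul,
    Matrix.add_apply, hsingle, Matrix.smul_apply, Matrix.map_apply, mul_diagonal,
    smul_eq_mul] at key
  linear_combination key

end Derivation

theorem Matrix.det_succ_column_zero_swap {A : Type*} [CommRing A] {k : ℕ}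
    (M : Matrix (Fin (k + 1)) (Fin (k + 1)) A) (j : Fin k) :
    -M.det = ∑ u : Fin (k + 1), (-1) ^ (u : ℕ) * M u j.succ *
      ((M.submatrix u.succAbove Fin.succ).updateCol j fun i => M (u.succAbove i) 0).det := by
  have hswap : (M.submatrix id (Equiv.swap 0 j.succ)).det = -M.det := by
    rw [Matrix.det_permute', Equiv.Perm.sign_swap (Fin.succ_ne_zero j).symm]
    simp
  rw [← hswap, Matrix.det_succ_column_zero]
  refine Finset.sum_congr rfl fun u _ => ?_
  congr 2
  ext i l
  rcases eq_or_ne l j with rfl | hl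
  · simp
  · simp [Matrix.updateCol_ne hl, Equiv.swap_apply_of_ne_of_ne (Fin.succ_ne_zero l),
      Fin.succ_injective _ |>.ne hl]

theorem Matrix.map_pderiv_mvPolynomialX {m R : Type*} [DecidableEq m] [CommRing R] (a b : m) :
    (mvPolynomialX m m R).map (pderiv (a, b)) = single a b 1 := by
  ext i j
  simp [pderiv_X, Pi.single_apply, single_apply, Prod.ext_iff, eq_comm]

section Cayley

variable {m R : Type*} [DecidableEq m] [CommRing R]

local notation "𝕏" => mvPolynomialX m m R

theorem aevalPDeriv_det_submatrix_succ {k : ℕ} (α β : Fin (k + 1) → m)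
    (p : MvPolynomial (m × m) R) :
    aevalPDeriv _ R ((𝕏).submatrix α β).det p = ∑ u : Fin (k + 1), (-1) ^ (u : ℕ) *
      pderiv (α 0, β u)
        (aevalPDeriv _ R ((𝕏).submatrix (α ∘ Fin.succ) (β ∘ u.succAbove)).det p) := by
  rw [det_succ_row_zero, map_sum, LinearMap.sum_apply]
  refine Finset.sum_congr rfl fun u _ => ?_
  have hsign : (-1 : MvPolynomial (m × m) R) ^ (u : ℕ) = algebraMap R _ ((-1) ^ (u : ℕ)) := by
    simp
  simp only [hsign, submatrix_apply, mvPolynomialX_apply, submatrix_submatrix, map_mul,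
    AlgHom.commutes, aevalPDeriv_X, Module.End.mul_apply, Module.algebraMap_end_apply,
    Algebra.smul_def]
  rfl

variable [Fintype m]

theorem sum_det_mul_pderiv_det_adjugate_submatrix {k : ℕ} (α β : Fin (k + 1) → m) :
    ∑ u : Fin (k + 1), (-1) ^ (u : ℕ) * ((𝕏).det *
      pderiv (α 0, β u) ((𝕏).adjugate.submatrix (β ∘ u.succAbove) (α ∘ Fin.succ)).det)
      = 2 * k * ((𝕏).adjugate.submatrix β α).det := by
  set A := (𝕏).adjugate.submatrix β α
  have hrank : ∀ u : Fin (k + 1),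
      (𝕏).det * pderiv (α 0, β u) (A.submatrix u.succAbove Fin.succ).det
      = k * (A u 0 * (A.submatrix u.succAbove Fin.succ).det) - ∑ j : Fin k, A u j.succ *
        ((A.submatrix u.succAbove Fin.succ).updateCol j fun i => A (u.succAbove i) 0).det :=
    fun u => by
      simpa using Derivation.mul_map_det_of_mul_map_eq_sub _ (A.submatrix u.succAbove Fin.succ)
        _ (A u 0) (fun i => A (u.succAbove i) 0) (fun j => A u j.succ) fun i j =>
          Derivation.det_mul_map_adjugate_of_map_eq_single (map_pderiv_mvPolynomialX _ _) _ _
  have hcol0 : ∑ u : Fin (k + 1), (-1) ^ (u : ℕ) *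
      (k * (A u 0 * (A.submatrix u.succAbove Fin.succ).det)) = k * A.det := by
    rw [det_succ_column_zero, Finset.mul_sum]
    exact Finset.sum_congr rfl fun u _ => by ring
  have hcolj : ∑ u : Fin (k + 1), ∑ j : Fin k, (-1) ^ (u : ℕ) * (A u j.succ *
      ((A.submatrix u.succAbove Fin.succ).updateCol j fun i => A (u.succAbove i) 0).det)
      = -(k * A.det) := by
    have hswap : ∀ j : Fin k, ∑ u : Fin (k + 1), (-1) ^ (u : ℕ) * (A u j.succ *
        ((A.submatrix u.succAbove Fin.succ).updateCol j fun i => A (u.succAbove i) 0).det)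
        = -A.det := fun j => by
      rw [det_succ_column_zero_swap]
      exact Finset.sum_congr rfl fun u _ => by ring
    rw [Finset.sum_comm, Finset.sum_congr rfl fun j _ => hswap j, Finset.sum_const,
      Finset.card_univ, Fintype.card_fin, nsmul_eq_mul, mul_neg]
  calc _ = ∑ u : Fin (k + 1), (-1) ^ (u : ℕ) *
        (k * (A u 0 * (A.submatrix u.succAbove Fin.succ).det) - ∑ j : Fin k, A u j.succ *
          ((A.submatrix u.succAbove Fin.succ).updateCol j fun i => A (u.succAbove i) 0).det) :=
        Finset.sum_congr rfl fun u _ => congrArg _ (hrank u)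
    _ = k * A.det - -(k * A.det) := by
        rw [← hcolj, ← hcol0, ← Finset.sum_sub_distrib]
        exact Finset.sum_congr rfl fun u _ => by rw [mul_sub, Finset.mul_sum]
    _ = 2 * k * A.det := by ring

theorem det_pow_mul_aevalPDeriv_det_submatrix (s : ℕ) {k : ℕ} (α β : Fin k → m) :
    (𝕏).det ^ k * aevalPDeriv _ R ((𝕏).submatrix α β).det ((𝕏).det ^ s)
      = (ascPochhammer R k).eval (s : R) •
        (((𝕏).adjugate.submatrix β α).det * (𝕏).det ^ s) := by
  induction k with
  | zero => simp
  | succ k ih =>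
    set f := (𝕏).det
    set Y := (𝕏).adjugate
    set P := (ascPochhammer R k).eval (s : R)
    have hterm : ∀ u : Fin (k + 1), f ^ (k + 1) * pderiv (α 0, β u)
        (aevalPDeriv _ R ((𝕏).submatrix (α ∘ Fin.succ) (β ∘ u.succAbove)).det (f ^ s))
        = C P * ((f * pderiv (α 0, β u) (Y.submatrix (β ∘ u.succAbove) (α ∘ Fin.succ)).det
          + (↑s - ↑k : MvPolynomial (m × m) R) *
            (Y (β u) (α 0) * (Y.submatrix (β ∘ u.succAbove) (α ∘ Fin.succ)).det))
          * f ^ s) := fun u => by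
        have hg := ih (α ∘ Fin.succ) (β ∘ u.succAbove)
        rw [smul_eq_C_mul, ← mul_assoc] at hg
        rw [Derivation.pow_succ_mul_map_of_pow_mul_eq _ hg, pderiv_C_mul,
          Derivation.map_det_of_map_eq_single (map_pderiv_mvPolynomialX _ _)]
        ring
    have hcol0 : ∑ u : Fin (k + 1), (-1) ^ (u : ℕ) *
        (Y (β u) (α 0) * (Y.submatrix (β ∘ u.succAbove) (α ∘ Fin.succ)).det)
        = (Y.submatrix β α).det := by
      rw [det_succ_column_zero]
      exact Finset.sum_congr rfl fun u _ => by rw [mul_assoc]; rfl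
    rw [aevalPDeriv_det_submatrix_succ, Finset.mul_sum]
    calc _ = ∑ u : Fin (k + 1), (-1) ^ (u : ℕ) * (C P *
          ((f * pderiv (α 0, β u) (Y.submatrix (β ∘ u.succAbove) (α ∘ Fin.succ)).det
            + (↑s - ↑k : MvPolynomial (m × m) R) *
              (Y (β u) (α 0) * (Y.submatrix (β ∘ u.succAbove) (α ∘ Fin.succ)).det))
            * f ^ s)) :=
          Finset.sum_congr rfl fun u _ => by rw [mul_left_comm, hterm]
      _ = C P * ((∑ u : Fin (k + 1), (-1) ^ (u : ℕ) *
            (f * pderiv (α 0, β u) (Y.submatrix (β ∘ u.succAbove) (α ∘ Fin.succ)).det)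
          + (↑s - ↑k : MvPolynomial (m × m) R) * ∑ u : Fin (k + 1), (-1) ^ (u : ℕ) *
            (Y (β u) (α 0) * (Y.submatrix (β ∘ u.succAbove) (α ∘ Fin.succ)).det))
          * f ^ s) := by
          rw [Finset.mul_sum, ← Finset.sum_add_distrib, Finset.sum_mul, Finset.mul_sum]
          exact Finset.sum_congr rfl fun u _ => by ring
      _ = _ := by
          rw [sum_det_mul_pderiv_det_adjugate_submatrix, hcol0, smul_eq_C_mul,
            ascPochhammer_succ_eval, map_mul, map_add, map_natCast, map_natCast]
          ring

end Cayley

theorem aevalPDeriv_det_mvPolynomialX_pow {m R : Type*} [Fintype m] [DecidableEq m] [Nonempty m]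
    [CommRing R] [IsDomain R] {s : ℕ} (hs : 1 ≤ s) :
    aevalPDeriv _ R (mvPolynomialX m m R).det ((mvPolynomialX m m R).det ^ s)
      = (ascPochhammer R (Fintype.card m)).eval (s : R) •
        (mvPolynomialX m m R).det ^ (s - 1) := by
  have hminor := det_pow_mul_aevalPDeriv_det_submatrix (R := R) s (Fintype.equivFin m).symm
    (Fintype.equivFin m).symm
  rw [det_submatrix_equiv_self, det_submatrix_equiv_self, det_adjugate] at hminor
  refine mul_left_cancel₀ (pow_ne_zero (Fintype.card m) (det_mvPolynomialX_ne_zero m R)) ?_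
  rw [hminor, mul_smul_comm, ← pow_add, ← pow_add]
  congr 2
  have := Fintype.card_pos (α := m)
  omega

theorem detDeriv_eq_aevalPDeriv (n : ℕ) :
    detDeriv n = aevalPDeriv _ ℚ (mvPolynomialX (Fin n) (Fin n) ℚ).det := by
  rw [← det_transpose, det_apply, map_sum, detDeriv]
  refine Finset.sum_congr rfl fun σ _ => ?_
  rw [Units.smul_def, map_zsmul, ← Int.cast_smul_eq_zsmul ℚ, ← List.prod_ofFn, map_list_prod,
    List.map_ofFn]
  congr 2
  ext1 i
  simp

/-- Cayley's identity: `det(∂) (det X)^s = s(s+1)⋯(s+n−1) · (det X)^{s−1}`. -/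
theorem cayley_identity (n s : ℕ) (hn : 1 ≤ n) (hs : 1 ≤ s) :
    detDeriv n ((genericMatrix n).det ^ s) =
      ((ascPochhammer ℚ n).eval (s : ℚ)) • (genericMatrix n).det ^ (s - 1) := by
  have : Nonempty (Fin n) := ⟨⟨0, hn⟩⟩
  have h := aevalPDeriv_det_mvPolynomialX_pow (m := Fin n) (R := ℚ) hs
  rw [Fintype.card_fin] at h
  rw [detDeriv_eq_aevalPDeriv]
  exact h
end

section
/- Let d ∈ ℂ and let k₁ ≥ k₂ ≥ k₃ ≥ 0 be integers, and set k₄ = 0. Then the following identity of polynomials in λ holds: ∏_{1≤i<j≤3} (λ − (d/4)(i+j−2))_{k_i+k_j} · (λ)_{k₁+k₂} · (λ − d/2)_{min(k₁, k₂+k₃)} · (λ − d)_{k₃} = ∏_{1≤i<j≤4} (λ − (d/4)(i+j−3))_{k_i+k_j} · (λ + k₁ + k₃ − d/4)_{k₂−k₃} · (λ + max(k₁, k₂+k₃) − d/2)_{min(k₃, k₁−k₂)} · (λ + k₂ − 3d/4)_{k₃}. -/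
/-- Pochhammer symbol `(a)_n` for complex `a`. -/
noncomputable def pochC (a : ℂ) (n : ℕ) : ℂ := (ascPochhammer ℂ n).eval a

lemma pochC_add (a : ℂ) (m n : ℕ) : pochC a (m + n) = pochC a m * pochC (a + m) n := by
  unfold pochC
  rw [← ascPochhammer_mul, Polynomial.eval_mul, Polynomial.eval_comp]
  simp

/-- Equality of the two forms of the normalizing constant `C^{d,d₂}(λ,𝐤)` in the
rank-3 weighted Bergman inner product formula, as an identity of polynomials in `λ`
(stated for every `λ ∈ ℂ`), with `k₄ = 0`. -/
theorem rank3_constant_identity (d : ℂ) (k1 k2 k3 : ℕ)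
    (h12 : k2 ≤ k1) (h23 : k3 ≤ k2) (lam : ℂ) :
    (pochC (lam - d / 4) (k1 + k2) * pochC (lam - d / 2) (k1 + k3) *
        pochC (lam - 3 * d / 4) (k2 + k3)) *
      (pochC lam (k1 + k2) * pochC (lam - d / 2) (min k1 (k2 + k3)) *
        pochC (lam - d) k3) =
    (pochC lam (k1 + k2) * pochC (lam - d / 4) (k1 + k3) *
        pochC (lam - d / 2) k1 * pochC (lam - d / 2) (k2 + k3) *
        pochC (lam - 3 * d / 4) k2 * pochC (lam - d) k3) *
      (pochC (lam + (k1 : ℂ) + (k3 : ℂ) - d / 4) (k2 - k3) *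
        pochC (lam + ((max k1 (k2 + k3) : ℕ) : ℂ) - d / 2) (min k3 (k1 - k2)) *
        pochC (lam + (k2 : ℂ) - 3 * d / 4) k3) := by
  have E1 : pochC (lam - d / 4) (k1 + k2)
      = pochC (lam - d / 4) (k1 + k3) * pochC (lam + (k1 : ℂ) + (k3 : ℂ) - d / 4) (k2 - k3) := by
    have h := pochC_add (lam - d / 4) (k1 + k3) (k2 - k3)
    rw [show (k1 + k3) + (k2 - k3) = k1 + k2 by omega] at h
    rw [h, show lam - d / 4 + ((k1 + k3 : ℕ) : ℂ) = lam + (k1 : ℂ) + (k3 : ℂ) - d / 4 by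
      push_cast; ring]
  have E2 : pochC (lam - 3 * d / 4) (k2 + k3)
      = pochC (lam - 3 * d / 4) k2 * pochC (lam + (k2 : ℂ) - 3 * d / 4) k3 := by
    rw [pochC_add, show lam - 3 * d / 4 + (k2 : ℂ) = lam + (k2 : ℂ) - 3 * d / 4 by ring]
  rcases le_or_gt k1 (k2 + k3) with h | h
  · rw [min_eq_left h, max_eq_right h, min_eq_right (by omega : k1 - k2 ≤ k3)]
    have E3 : pochC (lam - d / 2) (k1 + k3)
        = pochC (lam - d / 2) (k2 + k3) * pochC (lam + ((k2 + k3 : ℕ) : ℂ) - d / 2) (k1 - k2) := by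
      have h' := pochC_add (lam - d / 2) (k2 + k3) (k1 - k2)
      rw [show (k2 + k3) + (k1 - k2) = k1 + k3 by omega] at h'
      rw [h', show lam - d / 2 + ((k2 + k3 : ℕ) : ℂ) = lam + ((k2 + k3 : ℕ) : ℂ) - d / 2 by ring]
    rw [E1, E2, E3]; ring
  · rw [min_eq_right h.le, max_eq_left h.le, min_eq_left (by omega : k3 ≤ k1 - k2)]
    have E3 : pochC (lam - d / 2) (k1 + k3)
        = pochC (lam - d / 2) k1 * pochC (lam + ((k1 : ℕ) : ℂ) - d / 2) k3 := by
      rw [pochC_add, show lam - d / 2 + (k1 : ℂ) = lam + ((k1 : ℕ) : ℂ) - d / 2 by ring]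
    rw [E1, E2, E3]; ring
end
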